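/- arXiv:2202.06624 — 6 statements merged into one kernel-verified Lean document; each statement's English description precedes it below -/
import Mathlib

section
/- Let X be a random variable with outcomes x_1,…,x_k and let Y be a random variable on the same space with values in {x_1,…,x_k} such that for each i, P(Y = x_i | X = x_i) = p_i ≥ p. Define Z = 1 if Y = X and Z = 0 otherwise. Then I(X;(Y,Z)) ≥ p·H(X). -/
/-- Shannon entropy (base 2) of a probability mass function on a finite type. -/
noncomputable def shannonH {α : Type*} [Fintype α] (q : α → ℝ) : ℝ :=
  - ∑ x, q x * Real.logb 2 (q x)

open Finset in
lemma pointwise_bound (u v w : ℝ) (hu : 0 ≤ u) (huv : u ≤ v) (huw : u ≤ w) :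
    u * (Real.logb 2 v + Real.logb 2 w - Real.logb 2 u) ≤ (v * w - u) / Real.log 2 := by
  have h2 : (0:ℝ) < Real.log 2 := Real.log_pos one_lt_two
  rcases eq_or_lt_of_le hu with h | h
  · rw [← h]
    simp only [zero_mul, sub_zero]
    have : 0 ≤ v * w := mul_nonneg (h ▸ huv) (h ▸ huw)
    positivity
  · have hv : 0 < v := lt_of_lt_of_le h huv
    have hw : 0 < w := lt_of_lt_of_le h huw
    have heq : Real.logb 2 v + Real.logb 2 w - Real.logb 2 u
        = Real.log (v * w / u) / Real.log 2 := by
      rw [Real.logb, Real.logb, Real.logb,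
        Real.log_div (by positivity) h.ne', Real.log_mul hv.ne' hw.ne']
      ring
    rw [heq]
    have hlog : Real.log (v * w / u) ≤ v * w / u - 1 :=
      Real.log_le_sub_one_of_pos (by positivity)
    calc u * (Real.log (v * w / u) / Real.log 2)
        ≤ u * ((v * w / u - 1) / Real.log 2) := by gcongr
      _ = (v * w - u) / Real.log 2 := by
          field_simp

open Finset in
lemma aux_main {k : ℕ} (p : ℝ) (hp0 : 0 ≤ p) (hp1 : p ≤ 1)
    (q : Fin k × Fin k → ℝ) (hq0 : ∀ x, 0 ≤ q x) (hq1 : ∑ x, q x = 1)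
    (hdiag : ∀ i : Fin k, p * (∑ j, q (i, j)) ≤ q (i, i)) :
    shannonH (fun i => ∑ j, q (i, j))
      + shannonH (fun yz : Fin k × Bool => ∑ i, if decide (yz.1 = i) = yz.2 then q (i, yz.1) else 0)
      - shannonH (fun x : Fin k × (Fin k × Bool) => if decide (x.2.1 = x.1) = x.2.2 then q (x.1, x.2.1) else 0)
      ≥ p * shannonH (fun i => ∑ j, q (i, j)) := by
  classical
  set L : ℝ → ℝ := Real.logb 2 with hL
  set s : Fin k → ℝ := fun i => ∑ j, q (i, j) with hs
  set g : Fin k × Fin k → ℝ := fun x => if x.2 = x.1 then 0 else q x with hg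
  set c : Fin k → ℝ := fun j => ∑ i, g (i, j) with hc
  have hg0 : ∀ x, 0 ≤ g x := by
    intro x; simp only [hg]; split <;> [exact le_rfl; exact hq0 x]
  have hgq : ∀ x, g x ≤ q x := by
    intro x; simp only [hg]; split <;> [exact hq0 x; exact le_rfl]
  have hs0 : ∀ i, 0 ≤ s i := fun i => Finset.sum_nonneg fun j _ => hq0 _
  have hs1 : ∑ i, s i = 1 := by
    rw [hs, ← hq1, Fintype.sum_prod_type]
  have hsle1 : ∀ i, s i ≤ 1 := by
    intro i
    rw [← hs1]
    exact Finset.single_le_sum (fun j _ => hs0 j) (Finset.mem_univ i)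
  have hgs : ∀ x : Fin k × Fin k, g x ≤ s x.1 := by
    intro x
    calc g x ≤ q x := hgq x
      _ = q (x.1, x.2) := by rw [Prod.mk.eta]
      _ ≤ s x.1 := Finset.single_le_sum (fun j _ => hq0 (x.1, j)) (Finset.mem_univ x.2)
  have hgc : ∀ x : Fin k × Fin k, g x ≤ c x.2 := by
    intro x
    rw [hc]
    calc g x = g (x.1, x.2) := by rw [Prod.mk.eta]
      _ ≤ ∑ i, g (i, x.2) := Finset.single_le_sum (fun i _ => hg0 (i, x.2)) (Finset.mem_univ x.1)
  have ha : ∀ i, ∑ j, g (i, j) = s i - q (i, i) := by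
    intro i
    have : ∀ j, g (i, j) = q (i, j) - (if j = i then q (i, j) else 0) := by
      intro j
      simp only [hg]
      by_cases h : j = i <;> simp [h]
    rw [Finset.sum_congr rfl (fun j _ => this j), Finset.sum_sub_distrib,
      Finset.sum_ite_eq' univ i (fun j => q (i, j)) , hs]
    simp
  -- entropy of r equals entropy of q
  have Hr : shannonH (fun x : Fin k × (Fin k × Bool) =>
        if decide (x.2.1 = x.1) = x.2.2 then q (x.1, x.2.1) else 0)
      = - ∑ x : Fin k × Fin k, q x * L (q x) := by
    rw [shannonH, Fintype.sum_prod_type]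
    congr 1
    rw [Fintype.sum_prod_type]
    apply Finset.sum_congr rfl
    intro i _
    rw [Fintype.sum_prod_type]
    apply Finset.sum_congr rfl
    intro j _
    rw [Fintype.sum_bool]
    by_cases h : j = i <;> simp [h, hL]
  -- entropy of rYZ
  have HYZ : shannonH (fun yz : Fin k × Bool =>
        ∑ i, if decide (yz.1 = i) = yz.2 then q (i, yz.1) else 0)
      = - ∑ j, c j * L (c j) - ∑ j, q (j, j) * L (q (j, j)) := by
    rw [shannonH, Fintype.sum_prod_type]
    have htrue : ∀ j : Fin k, (∑ i, if decide (j = i) = true then q (i, j) else 0) = q (j, j) := by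
      intro j
      simp only [decide_eq_true_eq]
      rw [Finset.sum_ite_eq univ j (fun i => q (i, j))]
      simp
    have hfalse : ∀ j : Fin k, (∑ i, if decide (j = i) = false then q (i, j) else 0) = c j := by
      intro j
      rw [hc]
      apply Finset.sum_congr rfl
      intro i _
      simp only [hg, decide_eq_false_iff_not]
      by_cases h : j = i <;> simp [h]
    have : ∀ j : Fin k, ∑ b : Bool,
        (∑ i, if decide (j = i) = b then q (i, j) else 0)
          * L (∑ i, if decide (j = i) = b then q (i, j) else 0)
        = q (j, j) * L (q (j, j)) + c j * L (c j) := by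
      intro j
      rw [Fintype.sum_bool, htrue j, hfalse j]
    rw [Finset.sum_congr rfl (fun j _ => this j), Finset.sum_add_distrib]
    ring
  -- split q-entropy into diagonal and off-diagonal parts
  have Hsplit : ∑ x : Fin k × Fin k, q x * L (q x)
      = ∑ x : Fin k × Fin k, g x * L (g x) + ∑ j, q (j, j) * L (q (j, j)) := by
    have : ∀ x : Fin k × Fin k, q x * L (q x)
        = g x * L (g x) + (if x.2 = x.1 then q x * L (q x) else 0) := by
      intro x
      simp only [hg]
      by_cases h : x.2 = x.1 <;> simp [h, hL]
    rw [Finset.sum_congr rfl (fun x _ => this x), Finset.sum_add_distrib]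
    congr 1
    rw [Fintype.sum_prod_type]
    simp [Finset.sum_ite_eq']
  -- the key inequality
  have key : ∑ j, c j * L (c j) - ∑ x : Fin k × Fin k, g x * L (g x)
      ≤ (1 - p) * (- ∑ i, s i * L (s i)) := by
    have e1 : ∑ j, c j * L (c j) = ∑ x : Fin k × Fin k, g x * L (c x.2) := by
      rw [Fintype.sum_prod_type]
      rw [Finset.sum_comm]
      apply Finset.sum_congr rfl
      intro j _
      rw [hc, Finset.sum_mul]
    have e2 : ∑ x : Fin k × Fin k, g x * (L (c x.2) + L (s x.1) - L (g x)) ≤ 0 := by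
      have hbound : ∀ x : Fin k × Fin k, g x * (L (c x.2) + L (s x.1) - L (g x))
          ≤ (c x.2 * s x.1 - g x) / Real.log 2 := by
        intro x
        exact pointwise_bound (g x) (c x.2) (s x.1) (hg0 x) (hgc x) (hgs x)
      calc ∑ x : Fin k × Fin k, g x * (L (c x.2) + L (s x.1) - L (g x))
          ≤ ∑ x : Fin k × Fin k, (c x.2 * s x.1 - g x) / Real.log 2 :=
            Finset.sum_le_sum fun x _ => hbound x
        _ = 0 := by
            rw [← Finset.sum_div]
            have : ∑ x : Fin k × Fin k, (c x.2 * s x.1 - g x) = 0 := by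
              rw [Finset.sum_sub_distrib]
              have h1 : ∑ x : Fin k × Fin k, c x.2 * s x.1 = ∑ j, c j := by
                rw [Fintype.sum_prod_type]
                have : ∀ i : Fin k, ∑ j, c j * s i = (∑ j, c j) * s i := by
                  intro i; rw [← Finset.sum_mul]
                rw [Finset.sum_congr rfl (fun i _ => this i), ← Finset.mul_sum, hs1, mul_one]
              have h2 : ∑ x : Fin k × Fin k, g x = ∑ j, c j := by
                rw [Fintype.sum_prod_type, Finset.sum_comm]
              rw [h1, h2, sub_self]
            rw [this, zero_div]
    have e3 : ∑ x : Fin k × Fin k, g x * L (s x.1) = ∑ i, (s i - q (i, i)) * L (s i) := by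
      rw [Fintype.sum_prod_type]
      apply Finset.sum_congr rfl
      intro i _
      show ∑ y, g (i, y) * L (s i) = (s i - q (i, i)) * L (s i)
      rw [← Finset.sum_mul, ha i]
    have e4 : ∀ i : Fin k, -((s i - q (i, i)) * L (s i)) ≤ (1 - p) * (-(s i * L (s i))) := by
      intro i
      have hLs : L (s i) ≤ 0 := Real.logb_nonpos one_lt_two (hs0 i) (hsle1 i)
      have hd : 0 ≤ (q (i, i) - p * s i) * (-(L (s i))) :=
        mul_nonneg (sub_nonneg.2 (hdiag i)) (neg_nonneg.2 hLs)
      nlinarith [hd]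
    have esplit : ∑ x : Fin k × Fin k, g x * (L (c x.2) + L (s x.1) - L (g x))
        = ∑ x : Fin k × Fin k, g x * L (c x.2) + ∑ x : Fin k × Fin k, g x * L (s x.1)
          - ∑ x : Fin k × Fin k, g x * L (g x) := by
      rw [← Finset.sum_add_distrib, ← Finset.sum_sub_distrib]
      exact Finset.sum_congr rfl fun x _ => by ring
    calc ∑ j, c j * L (c j) - ∑ x : Fin k × Fin k, g x * L (g x)
        = (∑ x : Fin k × Fin k, g x * (L (c x.2) + L (s x.1) - L (g x)))
          - ∑ x : Fin k × Fin k, g x * L (s x.1) := by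
          rw [esplit, e1]; ring
      _ ≤ 0 - ∑ x : Fin k × Fin k, g x * L (s x.1) := by linarith [e2]
      _ = ∑ i, -((s i - q (i, i)) * L (s i)) := by
          rw [e3, zero_sub, ← Finset.sum_neg_distrib]
      _ ≤ ∑ i, (1 - p) * (-(s i * L (s i))) := Finset.sum_le_sum fun i _ => e4 i
      _ = (1 - p) * (- ∑ i, s i * L (s i)) := by
          rw [← Finset.mul_sum, ← Finset.sum_neg_distrib]
  -- conclude
  have HX : shannonH s = - ∑ i, s i * L (s i) := rfl
  rw [ge_iff_le, HX, HYZ, Hr, Hsplit]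
  linarith [key]

/-- `q` is the joint distribution of `(X,Y)`, both valued in the set
of outcomes `{x_1,…,x_k}` (identified with `Fin k`).  For each `i`,
`P(X = x_i, Y = x_i) ≥ p · P(X = x_i)`, i.e. `P(Y = x_i | X = x_i) ≥ p`.
With `Z := (Y = X)`, the joint distribution `r` of `(X,(Y,Z))` satisfies
`I(X;(Y,Z)) ≥ p · H(X)`, where `I(A;B) = H(A) + H(B) − H(A,B)`. -/
theorem mutualInfo_XYZ_ge {k : ℕ} (p : ℝ) (hp0 : 0 ≤ p) (hp1 : p ≤ 1)
    (q : Fin k × Fin k → ℝ) (hq0 : ∀ x, 0 ≤ q x) (hq1 : ∑ x, q x = 1)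
    (hdiag : ∀ i : Fin k, p * (∑ j, q (i, j)) ≤ q (i, i)) :
    letI qX : Fin k → ℝ := fun i => ∑ j, q (i, j)
    letI r : Fin k × (Fin k × Bool) → ℝ :=
      fun x => if (decide (x.2.1 = x.1)) = x.2.2 then q (x.1, x.2.1) else 0
    letI rYZ : Fin k × Bool → ℝ := fun yz => ∑ i, r (i, yz)
    shannonH qX + shannonH rYZ - shannonH r ≥ p * shannonH qX :=
  aux_main p hp0 hp1 q hq0 hq1 hdiag
end

section
/- If X and Y are random variables over a finite set such that Y = X with probability at least p (i.e., P(Y = X) ≥ p and moreover P(Y = x | X = x) ≥ p for every x), then I(X;Y) ≥ p·H(X) − 1. -/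
open Real Finset

/-- Log-sum inequality (natural log, with `0 log 0 = 0` conventions). -/
lemma logsum {ι : Type*} (s : Finset ι) (q r : ι → ℝ)
    (hq : ∀ i ∈ s, 0 ≤ q i) (hr : ∀ i ∈ s, 0 ≤ r i)
    (h0 : ∀ i ∈ s, r i = 0 → q i = 0) :
    (∑ i ∈ s, q i) * Real.log (∑ i ∈ s, q i)
      - (∑ i ∈ s, q i) * Real.log (∑ i ∈ s, r i)
      ≤ ∑ i ∈ s, (q i * Real.log (q i) - q i * Real.log (r i)) := by
  set Q := ∑ i ∈ s, q i with hQ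
  set R := ∑ i ∈ s, r i with hR
  have hQ0 : 0 ≤ Q := Finset.sum_nonneg hq
  have hR0 : 0 ≤ R := Finset.sum_nonneg hr
  rcases eq_or_lt_of_le hQ0 with hQz | hQpos
  · -- Q = 0 so all q i = 0
    have hall : ∀ i ∈ s, q i = 0 := by
      intro i hi
      have := (Finset.sum_eq_zero_iff_of_nonneg hq).mp hQz.symm
      exact this i hi
    have : ∑ i ∈ s, (q i * Real.log (q i) - q i * Real.log (r i)) = 0 := by
      apply Finset.sum_eq_zero; intro i hi; rw [hall i hi]; ring
    rw [this, ← hQz]; ring_nf; simp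
  rcases eq_or_lt_of_le hR0 with hRz | hRpos
  · -- R = 0 so all r i = 0 so all q i = 0, contradicting Q > 0
    exfalso
    have hall : ∀ i ∈ s, r i = 0 := by
      intro i hi
      exact (Finset.sum_eq_zero_iff_of_nonneg hr).mp hRz.symm i hi
    have : Q = 0 := Finset.sum_eq_zero fun i hi => h0 i hi (hall i hi)
    linarith
  -- main case
  have key : ∀ i ∈ s, q i * Real.log (r i) - q i * Real.log (q i)
      + q i * Real.log Q - q i * Real.log R ≤ Q * r i / R - q i := by
    intro i hi
    rcases eq_or_lt_of_le (hq i hi) with hqz | hqpos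
    · rw [← hqz]
      have : 0 ≤ Q * r i / R := div_nonneg (mul_nonneg hQpos.le (hr i hi)) hRpos.le
      simpa using this
    · have hri : 0 < r i := by
        rcases eq_or_lt_of_le (hr i hi) with h | h
        · exact absurd (h0 i hi h.symm) (ne_of_gt hqpos)
        · exact h
      have harg : 0 < r i * Q / (q i * R) := by positivity
      have := Real.log_le_sub_one_of_pos harg
      have hlog : Real.log (r i * Q / (q i * R)) =
          Real.log (r i) + Real.log Q - Real.log (q i) - Real.log R := by
        rw [Real.log_div (by positivity) (by positivity),
          Real.log_mul (ne_of_gt hri) (ne_of_gt hQpos),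
          Real.log_mul (ne_of_gt hqpos) (ne_of_gt hRpos)]
        ring
      rw [hlog] at this
      have h2 := mul_le_mul_of_nonneg_left this (le_of_lt hqpos)
      have h3 : q i * (r i * Q / (q i * R) - 1) = Q * r i / R - q i := by
        field_simp
      rw [h3] at h2
      nlinarith [h2]
  have hsum := Finset.sum_le_sum key
  have hL : ∑ i ∈ s, (q i * Real.log (r i) - q i * Real.log (q i)
      + q i * Real.log Q - q i * Real.log R)
      = (∑ i ∈ s, (q i * Real.log (r i) - q i * Real.log (q i)))
        + Q * Real.log Q - Q * Real.log R := by
    have hc : ∀ i ∈ s, q i * Real.log (r i) - q i * Real.log (q i)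
        + q i * Real.log Q - q i * Real.log R
        = (q i * Real.log (r i) - q i * Real.log (q i))
          + (q i * Real.log Q - q i * Real.log R) := fun i _ => by ring
    rw [Finset.sum_congr rfl hc, Finset.sum_add_distrib, Finset.sum_sub_distrib,
      Finset.sum_sub_distrib, ← Finset.sum_mul, ← Finset.sum_mul]
    ring
  have hRt : ∑ i ∈ s, (Q * r i / R - q i) = 0 := by
    rw [Finset.sum_sub_distrib]
    have : ∑ i ∈ s, Q * r i / R = Q := by
      rw [← Finset.sum_div, ← Finset.mul_sum, ← hR]
      field_simp
    rw [this, ← hQ]; ring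
  rw [hL, hRt] at hsum
  have : ∑ i ∈ s, (q i * Real.log (r i) - q i * Real.log (q i)) =
      - ∑ i ∈ s, (q i * Real.log (q i) - q i * Real.log (r i)) := by
    rw [← Finset.sum_neg_distrib]; apply Finset.sum_congr rfl; intro i _; ring
  rw [this] at hsum
  linarith

/-- convexity consequence: `a ln a + e ln e ≥ (a+e) ln (a+e) − (a+e) ln 2`. -/
lemma mul_log_add_mul_log_ge {a e : ℝ} (ha : 0 ≤ a) (he : 0 ≤ e) :
    (a + e) * Real.log (a + e) - (a + e) * Real.log 2
      ≤ a * Real.log a + e * Real.log e := by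
  have hconv := Real.convexOn_mul_log.2 (Set.mem_Ici.mpr ha) (Set.mem_Ici.mpr he)
      (by norm_num : (0:ℝ) ≤ 1/2) (by norm_num : (0:ℝ) ≤ 1/2) (by norm_num)
  rcases eq_or_lt_of_le (by positivity : (0:ℝ) ≤ a + e) with hs | hs
  · have ha0 : a = 0 := by linarith
    have he0 : e = 0 := by linarith
    simp [ha0, he0]
  · have hhalf : (1/2 : ℝ) • a + (1/2 : ℝ) • e = (a+e)/2 := by ring_nf
    rw [hhalf] at hconv
    have hlog : Real.log ((a+e)/2) = Real.log (a+e) - Real.log 2 :=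
      Real.log_div (ne_of_gt hs) (by norm_num)
    have : (a+e)/2 * Real.log ((a+e)/2) ≤ 1/2 * (a * Real.log a) + 1/2 * (e * Real.log e) := by
      simpa [smul_eq_mul, mul_assoc] using hconv
    rw [hlog] at this
    nlinarith [this]


/-- Gibbs' inequality (scaled by `p`, with a guard for zeros). -/
lemma gibbs {α : Type*} [Fintype α] (p : ℝ) (hp : 0 ≤ p) (a b : α → ℝ)
    (ha : ∀ x, 0 ≤ a x) (hb : ∀ x, 0 ≤ b x)
    (hsa : ∑ x, a x = 1) (hsb : ∑ x, b x = 1)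
    (hz : ∀ x, b x = 0 → p * a x = 0) :
    ∑ x, p * a x * Real.log (b x) ≤ ∑ x, p * a x * Real.log (a x) := by
  have key : ∀ x ∈ Finset.univ (α := α),
      p * a x * Real.log (b x) - p * a x * Real.log (a x) ≤ p * (b x - a x) := by
    intro x _
    rcases eq_or_lt_of_le (ha x) with haz | hap
    · rw [← haz]; simp; nlinarith [hb x, hp]
    rcases eq_or_lt_of_le (hb x) with hbz | hbp
    · have := hz x hbz.symm
      rw [← hbz, this]
      simp
      nlinarith [this]
    · have h1 : Real.log (b x / a x) ≤ b x / a x - 1 := Real.log_le_sub_one_of_pos (by positivity)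
      rw [Real.log_div (ne_of_gt hbp) (ne_of_gt hap)] at h1
      have h2 := mul_le_mul_of_nonneg_left h1 (le_of_lt hap)
      have h3 : a x * (b x / a x - 1) = b x - a x := by field_simp
      rw [h3] at h2
      nlinarith [h2, hp]
  have hsum := Finset.sum_le_sum key
  rw [Finset.sum_sub_distrib] at hsum
  have : ∑ x, p * (b x - a x) = 0 := by
    rw [← Finset.mul_sum, Finset.sum_sub_distrib, hsa, hsb]; ring
  rw [this] at hsum
  linarith

lemma shannonH_eq {β : Type*} [Fintype β] (f : β → ℝ) :
    shannonH f = (- ∑ x, f x * Real.log (f x)) / Real.log 2 := by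
  unfold shannonH
  rw [neg_div, Finset.sum_div]
  congr 1
  apply Finset.sum_congr rfl
  intro x _
  rw [← Real.log_div_log, mul_div_assoc]

/-- `q` is the joint distribution of `(X,Y)` over a finite set `α`,
with `P(Y = X) ≥ p` and moreover `P(Y = x | X = x) ≥ p` for every `x`
(expressed as `q (x,x) ≥ p · P(X = x)`). Then
`I(X;Y) = H(X) + H(Y) − H(X,Y) ≥ p·H(X) − 1`. -/
theorem mutualInfo_ge_p_entropy_sub_one {α : Type*} [Fintype α] [DecidableEq α]
    (p : ℝ) (hp0 : 0 ≤ p) (hp1 : p ≤ 1)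
    (q : α × α → ℝ) (hq0 : ∀ x, 0 ≤ q x) (hq1 : ∑ x, q x = 1)
    (hglob : p ≤ ∑ x, q (x, x))
    (hdiag : ∀ x : α, p * (∑ y, q (x, y)) ≤ q (x, x)) :
    letI qX : α → ℝ := fun a => ∑ b, q (a, b)
    letI qY : α → ℝ := fun b => ∑ a, q (a, b)
    shannonH qX + shannonH qY - shannonH q ≥ p * shannonH qX - 1 := by
  set qX : α → ℝ := fun a => ∑ b, q (a, b)
  set qY : α → ℝ := fun b => ∑ a, q (a, b)
  have hqXd : ∀ x, qX x = ∑ y, q (x, y) := fun _ => rfl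
  have hqYd : ∀ y, qY y = ∑ x, q (x, y) := fun _ => rfl
  have hqX0 : ∀ x, 0 ≤ qX x := fun x => Finset.sum_nonneg fun y _ => hq0 (x, y)
  have hqY0 : ∀ y, 0 ≤ qY y := fun y => Finset.sum_nonneg fun x _ => hq0 (x, y)
  have hqX1 : ∑ x, qX x = 1 := by rw [← hq1, Fintype.sum_prod_type]
  have hqY1 : ∑ y, qY y = 1 := by rw [← hq1, Fintype.sum_prod_type_right]
  have hqYle1 : ∀ y, qY y ≤ 1 := by
    intro y
    rw [← hqY1]
    exact Finset.single_le_sum (fun i _ => hqY0 i) (Finset.mem_univ y)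
  have hqleY : ∀ x y, q (x, y) ≤ qY y := fun x y =>
    Finset.single_le_sum (f := fun i => q (i, y)) (fun i _ => hq0 (i, y)) (Finset.mem_univ x)
  have hqleX : ∀ x y, q (x, y) ≤ qX x := fun x y =>
    Finset.single_le_sum (f := fun i => q (x, i)) (fun i _ => hq0 (x, i)) (Finset.mem_univ y)
  have hlog2 : (0:ℝ) < Real.log 2 := Real.log_pos (by norm_num)
  set L : α × α → ℝ :=
    fun z => q z * (Real.log (q z) - Real.log (qX z.1) - Real.log (qY z.2)) with hLdef
  -- Identity: mutual information = (∑ L)/log 2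
  have e1 : ∑ z : α × α, q z * Real.log (qX z.1) = ∑ x, qX x * Real.log (qX x) := by
    rw [Fintype.sum_prod_type]
    refine Finset.sum_congr rfl fun x _ => ?_
    rw [hqXd x, Finset.sum_mul]
  have e2 : ∑ z : α × α, q z * Real.log (qY z.2) = ∑ y, qY y * Real.log (qY y) := by
    rw [Fintype.sum_prod_type_right]
    refine Finset.sum_congr rfl fun y _ => ?_
    rw [hqYd y, Finset.sum_mul]
  have e3 : ∑ z, L z = ∑ z, q z * Real.log (q z) - ∑ x, qX x * Real.log (qX x)
      - ∑ y, qY y * Real.log (qY y) := by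
    rw [← e1, ← e2, ← Finset.sum_sub_distrib, ← Finset.sum_sub_distrib]
    exact Finset.sum_congr rfl fun z _ => by simp only [hLdef]; ring
  have hId : shannonH qX + shannonH qY - shannonH q = (∑ z, L z) / Real.log 2 := by
    rw [shannonH_eq, shannonH_eq, shannonH_eq, e3]
    field_simp
    ring
  -- Per-row lower bound
  have hcore : ∀ x : α, -(qX x) * Real.log 2 - p * qX x * Real.log (qY x)
      ≤ ∑ y, L (x, y) := by
    intro x
    rw [← Finset.add_sum_erase Finset.univ (fun y => L (x, y)) (Finset.mem_univ x)]
    set a := q (x, x) with hadef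
    set e := ∑ y ∈ Finset.univ.erase x, q (x, y) with hedef
    have ha0 : 0 ≤ a := hq0 _
    have he0 : 0 ≤ e := Finset.sum_nonneg fun y _ => hq0 (x, y)
    have hsae : qX x = a + e := by
      rw [hqXd x, ← Finset.add_sum_erase Finset.univ (fun y => q (x, y)) (Finset.mem_univ x)]
    -- off-diagonal via log-sum
    have hoff_eq : ∀ y ∈ Finset.univ.erase x,
        L (x, y) = q (x, y) * Real.log (q (x, y)) - q (x, y) * Real.log (qX x * qY y) := by
      intro y _
      rcases eq_or_lt_of_le (hq0 (x, y)) with hz | hpos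
      · simp [hLdef, ← hz]
      · have h1 : 0 < qX x := lt_of_lt_of_le hpos (hqleX x y)
        have h2 : 0 < qY y := lt_of_lt_of_le hpos (hqleY x y)
        simp only [hLdef]
        rw [Real.log_mul (ne_of_gt h1) (ne_of_gt h2)]
        ring
    have hls := logsum (Finset.univ.erase x) (fun y => q (x, y)) (fun y => qX x * qY y)
      (fun y _ => hq0 (x, y)) (fun y _ => mul_nonneg (hqX0 x) (hqY0 y))
      (by
        intro y _ hzero
        rcases mul_eq_zero.mp hzero with h | h
        · exact le_antisymm (h ▸ hqleX x y) (hq0 (x, y))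
        · exact le_antisymm (h ▸ hqleY x y) (hq0 (x, y)))
    set R := ∑ y ∈ Finset.univ.erase x, qX x * qY y with hRdef
    have hRle : R ≤ qX x := by
      rw [hRdef, ← Finset.mul_sum]
      calc qX x * ∑ y ∈ Finset.univ.erase x, qY y
          ≤ qX x * 1 := by
            apply mul_le_mul_of_nonneg_left _ (hqX0 x)
            exact le_trans (Finset.sum_le_sum_of_subset_of_nonneg
              (Finset.erase_subset _ _) (fun i _ _ => hqY0 i)) (le_of_eq hqY1)
        _ = qX x := mul_one _
    have hRge : qX x * e ≤ R := by
      rw [hRdef, hedef, Finset.mul_sum]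
      exact Finset.sum_le_sum fun y _ => mul_le_mul_of_nonneg_left (hqleY x y) (hqX0 x)
    have hstep : e * Real.log e - e * Real.log (qX x)
        ≤ ∑ y ∈ Finset.univ.erase x, L (x, y) := by
      rw [Finset.sum_congr rfl hoff_eq]
      have hls' : e * Real.log e - e * Real.log R
          ≤ ∑ y ∈ Finset.univ.erase x,
            (q (x, y) * Real.log (q (x, y)) - q (x, y) * Real.log (qX x * qY y)) := hls
      refine le_trans ?_ hls'
      rcases eq_or_lt_of_le he0 with hez | hep
      · rw [← hez]; norm_num
      · have hX : 0 < qX x := by rw [hsae]; linarith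
        have hR0 : 0 < R := lt_of_lt_of_le (by positivity) hRge
        have hlogR : Real.log R ≤ Real.log (qX x) := Real.log_le_log hR0 hRle
        nlinarith [hlogR, hep]
    have hdiagL : L (x, x) = a * Real.log a - a * Real.log (qX x) - a * Real.log (qY x) := by
      simp only [hLdef]; ring
    have hconv := mul_log_add_mul_log_ge ha0 he0
    rw [← hsae] at hconv
    have hlogY : Real.log (qY x) ≤ 0 := Real.log_nonpos (hqY0 x) (hqYle1 x)
    have hap : p * qX x ≤ a := by rw [hqXd x]; exact hdiag x
    have haY : a * Real.log (qY x) ≤ p * qX x * Real.log (qY x) := by nlinarith [hlogY, hap]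
    have hmul : (a + e) * Real.log (qX x) = qX x * Real.log (qX x) := by rw [← hsae]
    linarith [hstep, hconv, haY, hdiagL.ge, hdiagL.le, hmul]
  -- Gibbs
  have hG : ∑ x, p * qX x * Real.log (qY x) ≤ ∑ x, p * qX x * Real.log (qX x) := by
    apply gibbs p hp0 qX qY hqX0 hqY0 hqX1 hqY1
    intro x hx
    have h1 : p * qX x ≤ q (x, x) := by rw [hqXd x]; exact hdiag x
    have h2 : q (x, x) ≤ qY x := hqleY x x
    have h3 : 0 ≤ p * qX x := mul_nonneg hp0 (hqX0 x)
    linarith [hx ▸ h2]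
  -- Assemble
  have hKey : p * (-∑ x, qX x * Real.log (qX x)) - Real.log 2 ≤ ∑ z, L z := by
    rw [Fintype.sum_prod_type (f := L)]
    have h1 : ∑ x, (-(qX x) * Real.log 2 - p * qX x * Real.log (qY x))
        ≤ ∑ x, ∑ y, L (x, y) := Finset.sum_le_sum fun x _ => hcore x
    have h2 : ∑ x, (-(qX x) * Real.log 2 - p * qX x * Real.log (qY x))
        = -Real.log 2 - ∑ x, p * qX x * Real.log (qY x) := by
      rw [Finset.sum_sub_distrib]
      congr 1
      rw [← Finset.sum_mul, Finset.sum_neg_distrib, hqX1]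
      ring
    rw [h2] at h1
    have h3 : p * (-∑ x, qX x * Real.log (qX x)) = - ∑ x, p * qX x * Real.log (qX x) := by
      rw [mul_neg, Finset.mul_sum]
      congr 1
      exact Finset.sum_congr rfl fun x _ => by ring
    rw [h3]
    linarith [hG, h1]
  rw [ge_iff_le, hId, shannonH_eq qX]
  have hdiv : (p * (-∑ x, qX x * Real.log (qX x)) - Real.log 2) / Real.log 2
      ≤ (∑ z, L z) / Real.log 2 := by gcongr
  calc p * ((-∑ x, qX x * Real.log (qX x)) / Real.log 2) - 1
      = (p * (-∑ x, qX x * Real.log (qX x)) - Real.log 2) / Real.log 2 := by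
        field_simp
    _ ≤ (∑ z, L z) / Real.log 2 := hdiv
end

section
/- Any uniquely decodable binary code f : S → {0,1}* for a random variable X with values in a finite set S has expected codeword length E[|f(X)|] ≥ H(X), the Shannon entropy of X in bits. -/
/-- Kraft–McMillan inequality for uniquely decodable codes. -/
lemma kraft_mcmillan {S : Type*} [Fintype S] (f : S → List Bool)
    (hud : ∀ L₁ L₂ : List S, (L₁.map f).flatten = (L₂.map f).flatten → L₁ = L₂) :
    ∑ x, ((2 : ℝ)⁻¹) ^ (f x).length ≤ 1 := by
  classical
  set C : ℝ := ∑ x, ((2 : ℝ)⁻¹) ^ (f x).length with hC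
  set M : ℕ := Finset.univ.sup (fun x : S => (f x).length) with hM
  -- total code length of a tuple
  have hlen : ∀ {n : ℕ} (p : Fin n → S),
      (((List.ofFn p).map f).flatten).length = ∑ i, (f (p i)).length := by
    intro n p
    simp [List.length_flatten, Function.comp, List.sum_ofFn]
  -- main bound : C ^ n ≤ n * M + 1
  have hbound : ∀ n : ℕ, C ^ n ≤ (n * M + 1 : ℝ) := by
    intro n
    rw [hC, Fintype.sum_pow]
    -- group tuples by total length
    have hmap : ∀ p : Fin n → S, (∑ i, (f (p i)).length) ∈ Finset.range (n * M + 1) := by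
      intro p
      rw [Finset.mem_range, Nat.lt_succ_iff]
      calc ∑ i, (f (p i)).length ≤ ∑ _i : Fin n, M :=
            Finset.sum_le_sum fun i _ =>
              Finset.le_sup (f := fun x : S => (f x).length) (Finset.mem_univ (p i))
        _ = n * M := by simp [Finset.sum_const, mul_comm]
    have key : ∑ p : Fin n → S, ∏ i, ((2:ℝ)⁻¹) ^ (f (p i)).length
        = ∑ m ∈ Finset.range (n * M + 1),
            ∑ p ∈ Finset.univ.filter (fun p : Fin n → S => (∑ i, (f (p i)).length) = m),
              ((2:ℝ)⁻¹) ^ (∑ i, (f (p i)).length) := by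
      rw [Finset.sum_fiberwise_of_maps_to (fun p _ => hmap p)
        (fun p : Fin n → S => ((2:ℝ)⁻¹) ^ (∑ i, (f (p i)).length))]
      exact Finset.sum_congr rfl fun p _ => Finset.prod_pow_eq_pow_sum _ _ _
    rw [key]
    have hfib : ∀ m, (Finset.univ.filter
        (fun p : Fin n → S => (∑ i, (f (p i)).length) = m)).card ≤ 2 ^ m := by
      intro m
      have : ∀ p ∈ Finset.univ.filter
          (fun p : Fin n → S => (∑ i, (f (p i)).length) = m),
          (((List.ofFn p).map f).flatten).length = m := by
        intro p hp
        rw [hlen]; exact (Finset.mem_filter.mp hp).2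
      calc (Finset.univ.filter
          (fun p : Fin n → S => (∑ i, (f (p i)).length) = m)).card
          ≤ (Finset.univ : Finset (List.Vector Bool m)).card := by
            apply Finset.card_le_card_of_injOn
              (fun p => if hp : (((List.ofFn p).map f).flatten).length = m
                then ⟨((List.ofFn p).map f).flatten, hp⟩
                else ⟨List.replicate m false, List.length_replicate⟩)
            · intro p hp; exact Finset.mem_univ _
            · intro p hp q hq hpq
              have hp' := this p (Finset.mem_coe.mp hp)
              have hq' := this q (Finset.mem_coe.mp hq)
              simp only at hpq
              unfold List.Vector at hpq; rw [dif_pos hp', dif_pos hq'] at hpq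
              have heq : ((List.ofFn p).map f).flatten = ((List.ofFn q).map f).flatten :=
                congrArg Subtype.val hpq
              exact List.ofFn_injective (hud _ _ heq)
        _ = 2 ^ m := by
            rw [Finset.card_univ, card_vector, Fintype.card_bool]
    calc ∑ m ∈ Finset.range (n * M + 1),
          ∑ p ∈ Finset.univ.filter (fun p : Fin n → S => (∑ i, (f (p i)).length) = m),
            ((2:ℝ)⁻¹) ^ (∑ i, (f (p i)).length)
        ≤ ∑ m ∈ Finset.range (n * M + 1), (1 : ℝ) := by
          apply Finset.sum_le_sum
          intro m _
          have : ∑ p ∈ Finset.univ.filter (fun p : Fin n → S => (∑ i, (f (p i)).length) = m),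
              ((2:ℝ)⁻¹) ^ (∑ i, (f (p i)).length)
              = (Finset.univ.filter (fun p : Fin n → S =>
                  (∑ i, (f (p i)).length) = m)).card * ((2:ℝ)⁻¹) ^ m := by
            rw [Finset.sum_congr rfl (fun p hp => by
              rw [(Finset.mem_filter.mp hp).2]), Finset.sum_const, nsmul_eq_mul]
          rw [this]
          have h2 : ((2:ℝ)⁻¹) ^ m = ((2:ℝ) ^ m)⁻¹ := by rw [inv_pow]
          rw [h2]
          rw [mul_inv_le_iff₀ (by positivity), one_mul]
          calc ((Finset.univ.filter (fun p : Fin n → S =>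
                (∑ i, (f (p i)).length) = m)).card : ℝ) ≤ ((2 ^ m : ℕ) : ℝ) := by
                exact_mod_cast hfib m
            _ = (2:ℝ) ^ m := by push_cast; ring
      _ = (n * M + 1 : ℝ) := by
          rw [Finset.sum_const, Finset.card_range, nsmul_eq_mul]; push_cast; ring
  -- conclude C ≤ 1
  by_contra hCgt
  push_neg at hCgt
  set ε : ℝ := C - 1 with hε
  have hε0 : 0 < ε := by linarith
  set n : ℕ := max 1 (Nat.ceil ((2 * (M:ℝ) + 2) / ε ^ 2)) with hn
  have hn1 : (1 : ℕ) ≤ n := le_max_left _ _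
  have hnε : (2 * (M:ℝ) + 2 : ℝ) ≤ n * ε ^ 2 := by
    have h1 : ((2 * (M:ℝ) + 2 : ℝ) / ε ^ 2) ≤ (Nat.ceil ((2 * (M:ℝ) + 2) / ε ^ 2) : ℝ) :=
      Nat.le_ceil _
    have h2' : Nat.ceil ((2 * (M:ℝ) + 2) / ε ^ 2) ≤ n := le_max_right 1 _
    have h2 : (Nat.ceil ((2 * (M:ℝ) + 2) / ε ^ 2) : ℝ) ≤ (n : ℝ) := Nat.cast_le.mpr h2'
    have := h1.trans h2
    rw [div_le_iff₀ (by positivity)] at this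
    linarith
  have hCn : (1 + n * ε : ℝ) ≤ C ^ n := by
    have := one_add_mul_le_pow (a := ε) (by linarith) n
    calc (1 + n * ε : ℝ) = 1 + n * ε := rfl
      _ ≤ (1 + ε) ^ n := this
      _ = C ^ n := by rw [hε]; ring_nf
  have hC2n : C ^ (2 * n) ≤ (2 * n * M + 1 : ℝ) := by
    have := hbound (2 * n)
    calc C ^ (2 * n) ≤ ((2 * n : ℕ) * M + 1 : ℝ) := this
      _ = (2 * n * M + 1 : ℝ) := by push_cast; ring
  have hsq : ((1 + n * ε) ^ 2 : ℝ) ≤ C ^ (2 * n) := by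
    rw [two_mul, pow_add]
    have hCn0 : (0 : ℝ) ≤ 1 + n * ε := by positivity
    calc ((1 + n * ε) ^ 2 : ℝ) = (1 + n * ε) * (1 + n * ε) := sq (1 + n * ε) ▸ by ring
      _ ≤ C ^ n * C ^ n := mul_le_mul hCn hCn hCn0 (hCn0.trans hCn)
  have hfinal : (2 * n * M + 1 : ℝ) < (1 + n * ε) ^ 2 := by
    have hn1' : (1 : ℝ) ≤ n := by exact_mod_cast hn1
    have h1 : (n : ℝ) * (2 * M + 2) ≤ (n : ℝ) * (n * ε ^ 2) := by
      apply mul_le_mul_of_nonneg_left hnε (by positivity)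
    have h2 : ((n : ℝ) * ε) ^ 2 = (n : ℝ) * ((n:ℝ) * ε ^ 2) := by ring
    nlinarith [mul_pos (lt_of_lt_of_le zero_lt_one hn1') hε0, sq_nonneg ((n:ℝ) * ε)]
  linarith [hsq.trans hC2n]

/-- source coding theorem: any uniquely decodable binary code
`f : S → {0,1}*` (concatenations of codewords are injective on strings of
symbols) for a random variable `X` with distribution `μ` on the finite set `S`
has expected codeword length `E[|f(X)|] ≥ H(X)`. -/
theorem source_coding_theorem {S : Type*} [Fintype S]
    (μ : S → ℝ) (hμ0 : ∀ x, 0 ≤ μ x) (hμ1 : ∑ x, μ x = 1)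
    (f : S → List Bool)
    (hud : ∀ L₁ L₂ : List S, (L₁.map f).flatten = (L₂.map f).flatten → L₁ = L₂) :
    shannonH μ ≤ ∑ x, μ x * ((f x).length : ℝ) := by
  classical
  set q : S → ℝ := fun x => ((2 : ℝ)⁻¹) ^ (f x).length with hq
  have hq0 : ∀ x, 0 < q x := fun x => by positivity
  have hkraft : ∑ x, q x ≤ 1 := kraft_mcmillan f hud
  have hlog2 : (0 : ℝ) < Real.log 2 := Real.log_pos (by norm_num)
  -- Gibbs-type inequality, in natural log
  have gibbs : ∑ x, μ x * (Real.log (q x) - Real.log (μ x)) ≤ 0 := by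
    have step : ∀ x, μ x * (Real.log (q x) - Real.log (μ x)) ≤ q x - μ x := by
      intro x
      rcases eq_or_lt_of_le (hμ0 x) with h | h
      · rw [← h]; simp [le_of_lt (hq0 x)]
      · have hdiv : Real.log (q x / μ x) ≤ q x / μ x - 1 :=
          Real.log_le_sub_one_of_pos (div_pos (hq0 x) h)
        rw [Real.log_div (ne_of_gt (hq0 x)) (ne_of_gt h)] at hdiv
        have := mul_le_mul_of_nonneg_left hdiv (le_of_lt h)
        calc μ x * (Real.log (q x) - Real.log (μ x)) ≤ μ x * (q x / μ x - 1) := this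
          _ = q x - μ x := by field_simp
    calc ∑ x, μ x * (Real.log (q x) - Real.log (μ x)) ≤ ∑ x, (q x - μ x) :=
          Finset.sum_le_sum fun x _ => step x
      _ = (∑ x, q x) - 1 := by rw [Finset.sum_sub_distrib, hμ1]
      _ ≤ 0 := by linarith
  -- log q x = - len x * log 2
  have hlogq : ∀ x, Real.log (q x) = -((f x).length : ℝ) * Real.log 2 := by
    intro x
    rw [hq]
    simp only [Real.log_pow, Real.log_inv]
    ring
  have expand : ∑ x, μ x * (Real.log (q x) - Real.log (μ x))
      = -Real.log 2 * (∑ x, μ x * ((f x).length : ℝ)) - ∑ x, μ x * Real.log (μ x) := by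
    rw [Finset.sum_congr rfl (fun x _ => by
      rw [hlogq x]; ring : ∀ x ∈ Finset.univ, μ x * (Real.log (q x) - Real.log (μ x))
        = -Real.log 2 * (μ x * ((f x).length : ℝ)) - μ x * Real.log (μ x))]
    rw [Finset.sum_sub_distrib, Finset.mul_sum]
  rw [expand] at gibbs
  have hH : shannonH μ = (- ∑ x, μ x * Real.log (μ x)) / Real.log 2 := by
    rw [shannonH]
    have hterm : ∀ x ∈ (Finset.univ : Finset S), μ x * Real.logb 2 (μ x)
        = μ x * Real.log (μ x) / Real.log 2 := by
      intro x _; rw [← Real.log_div_log, mul_div_assoc]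
    rw [Finset.sum_congr rfl hterm, ← Finset.sum_div, neg_div]
  rw [hH, div_le_iff₀ hlog2]
  nlinarith [gibbs]
end

section
/- A graph with minimum degree d ≥ 2 and girth at least 2k+1 has at least 1 + d·((d−1)^k − 1)/(d−2) vertices when d ≥ 3 (and at least 2k+1 vertices when d = 2). -/
open SimpleGraph Finset

namespace MooreAux

variable {V : Type*} [DecidableEq V] {G : SimpleGraph V}

lemma concat_isPath {v w x : V} {p : G.Walk v w} (hp : p.IsPath) (h : G.Adj w x)
    (hx : x ∉ p.support) : (p.concat h).IsPath := by
  apply SimpleGraph.Walk.IsPath.mk'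
  rw [SimpleGraph.Walk.support_concat]
  simp only [List.concat_eq_append, List.nodup_append, List.nodup_cons, List.nodup_nil,
    and_true, List.disjoint_singleton]
  exact ⟨hp.support_nodup, ⟨by simp, fun a ha b hb hab => hx (by rw [List.mem_singleton] at hb; subst hb; subst hab; exact ha)⟩⟩

/-- A path from `v` to `w` containing the edge `s(v,w)` is that single edge. -/
lemma path_eq_single_edge {v w : V} {p : G.Walk v w} (hp : p.IsPath)
    (he : s(v, w) ∈ p.edges) : ∃ h : G.Adj v w, p = SimpleGraph.Walk.cons h SimpleGraph.Walk.nil := by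
  cases p with
  | nil => simp at he
  | cons h p' =>
    rename_i a _
    rw [SimpleGraph.Walk.edges_cons, List.mem_cons] at he
    rw [SimpleGraph.Walk.cons_isPath_iff] at hp
    rcases he with he | he
    · rw [Sym2.eq_iff] at he
      rcases he with ⟨-, rfl⟩ | ⟨hva, -⟩
      · have : p' = SimpleGraph.Walk.nil := SimpleGraph.Walk.isPath_iff_eq_nil.mp hp.1
        exact ⟨h, by rw [this]⟩
      · exact absurd hva h.ne
    · exact absurd (SimpleGraph.Walk.fst_mem_support_of_mem_edges p' he) hp.2

/-- Two distinct paths between the same endpoints yield a cycle of length at most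
the sum of their lengths. -/
lemma two_paths_cycle :
    ∀ (n : ℕ) {v w : V} (p q : G.Walk v w), p.IsPath → q.IsPath → p ≠ q →
      p.length + q.length ≤ n →
      ∃ (u : V) (c : G.Walk u u), c.IsCycle ∧ c.length ≤ p.length + q.length := by
  intro n
  induction n with
  | zero =>
    intro v w p q hp hq hne hlen
    have hp0 : p.length = 0 := by omega
    have hq0 : q.length = 0 := by omega
    have hvw : v = w := SimpleGraph.Walk.eq_of_length_eq_zero hp0
    subst hvw
    rw [SimpleGraph.Walk.isPath_iff_eq_nil.mp hp,
      SimpleGraph.Walk.isPath_iff_eq_nil.mp hq] at hne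
    exact absurd rfl hne
  | succ n ih =>
    intro v w p q hp hq hne hlen
    by_cases hvw : v = w
    · subst hvw
      rw [SimpleGraph.Walk.isPath_iff_eq_nil.mp hp,
        SimpleGraph.Walk.isPath_iff_eq_nil.mp hq] at hne
      exact absurd rfl hne
    by_cases hx : ∃ x, x ∈ p.support ∧ x ∈ q.support ∧ x ≠ v ∧ x ≠ w
    · obtain ⟨x, hxp, hxq, hxv, hxw⟩ := hx
      have hlp := congrArg SimpleGraph.Walk.length (p.take_spec hxp)
      have hlq := congrArg SimpleGraph.Walk.length (q.take_spec hxq)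
      rw [SimpleGraph.Walk.length_append] at hlp hlq
      have hp1pos : 0 < (p.takeUntil x hxp).length := by
        rcases Nat.eq_zero_or_pos (p.takeUntil x hxp).length with h0 | h
        · exact absurd (SimpleGraph.Walk.eq_of_length_eq_zero h0).symm hxv
        · exact h
      have hp2pos : 0 < (p.dropUntil x hxp).length := by
        rcases Nat.eq_zero_or_pos (p.dropUntil x hxp).length with h0 | h
        · exact absurd (SimpleGraph.Walk.eq_of_length_eq_zero h0) hxw
        · exact h
      have hq1pos : 0 < (q.takeUntil x hxq).length := by
        rcases Nat.eq_zero_or_pos (q.takeUntil x hxq).length with h0 | h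
        · exact absurd (SimpleGraph.Walk.eq_of_length_eq_zero h0).symm hxv
        · exact h
      have hq2pos : 0 < (q.dropUntil x hxq).length := by
        rcases Nat.eq_zero_or_pos (q.dropUntil x hxq).length with h0 | h
        · exact absurd (SimpleGraph.Walk.eq_of_length_eq_zero h0) hxw
        · exact h
      by_cases h1 : p.takeUntil x hxp = q.takeUntil x hxq
      · have h2 : p.dropUntil x hxp ≠ q.dropUntil x hxq := by
          intro h2
          apply hne
          rw [← p.take_spec hxp, ← q.take_spec hxq, h1, h2]
        obtain ⟨u, c, hc, hlc⟩ := ih (p.dropUntil x hxp) (q.dropUntil x hxq)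
          (hp.dropUntil hxp) (hq.dropUntil hxq) h2 (by omega)
        exact ⟨u, c, hc, by omega⟩
      · obtain ⟨u, c, hc, hlc⟩ := ih (p.takeUntil x hxp) (q.takeUntil x hxq)
          (hp.takeUntil hxp) (hq.takeUntil hxq) h1 (by omega)
        exact ⟨u, c, hc, by omega⟩
    · push_neg at hx
      refine ⟨v, p.append q.reverse, ⟨⟨⟨?_⟩, ?_⟩, ?_⟩,
        le_of_eq (by rw [SimpleGraph.Walk.length_append, SimpleGraph.Walk.length_reverse])⟩
      · -- edges nodup
        rw [SimpleGraph.Walk.edges_append, SimpleGraph.Walk.edges_reverse,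
          List.nodup_append]
        refine ⟨hp.isTrail.edges_nodup, (List.nodup_reverse).mpr hq.isTrail.edges_nodup, ?_⟩
        intro e hep e' heq hee; subst e'
        rw [List.mem_reverse] at heq
        induction e using Sym2.inductionOn with
        | hf a b =>
          have hab : G.Adj a b := p.adj_of_mem_edges hep
          have hap : a ∈ p.support := SimpleGraph.Walk.fst_mem_support_of_mem_edges p hep
          have hbp : b ∈ p.support := SimpleGraph.Walk.snd_mem_support_of_mem_edges p hep
          have haq : a ∈ q.support := SimpleGraph.Walk.fst_mem_support_of_mem_edges q heq
          have hbq : b ∈ q.support := SimpleGraph.Walk.snd_mem_support_of_mem_edges q heq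
          have ha : a = v ∨ a = w := by
            by_cases h : a = v
            · exact Or.inl h
            · exact Or.inr (hx a hap haq h)
          have hb : b = v ∨ b = w := by
            by_cases h : b = v
            · exact Or.inl h
            · exact Or.inr (hx b hbp hbq h)
          have hevw : s(a, b) = s(v, w) := by
            rcases ha with rfl | rfl <;> rcases hb with rfl | rfl
            · exact absurd rfl hab.ne
            · rfl
            · exact Sym2.eq_swap
            · exact absurd rfl hab.ne
          rw [hevw] at hep heq
          obtain ⟨h1, hpe⟩ := path_eq_single_edge hp hep
          obtain ⟨h2, hqe⟩ := path_eq_single_edge hq heq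
          exact hne (by rw [hpe, hqe])
      · -- not nil
        intro h
        have := congrArg SimpleGraph.Walk.length h
        rw [SimpleGraph.Walk.length_append, SimpleGraph.Walk.length_reverse] at this
        simp only [SimpleGraph.Walk.length_nil] at this
        have hp0 : p.length = 0 := by omega
        exact hvw (SimpleGraph.Walk.eq_of_length_eq_zero hp0)
      · -- support tail nodup
        rw [SimpleGraph.Walk.support_append]
        rw [SimpleGraph.Walk.support_eq_cons p]
        simp only [List.cons_append, List.tail_cons]
        rw [List.nodup_append]
        refine ⟨hp.support_nodup.tail, hq.reverse.support_nodup.tail, ?_⟩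
        · intro a ha1 b ha2 hab; subst b
          have hap : a ∈ p.support := by
            rw [SimpleGraph.Walk.support_eq_cons p]; exact List.mem_cons_of_mem _ ha1
          have haq : a ∈ q.support := by
            have h' : a ∈ q.reverse.support := List.mem_of_mem_tail ha2
            rwa [SimpleGraph.Walk.support_reverse, List.mem_reverse] at h'
          by_cases hav : a = v
          · subst hav
            have hnd := hp.support_nodup
            rw [SimpleGraph.Walk.support_eq_cons p, List.nodup_cons] at hnd
            exact hnd.1 ha1
          · have haw : a = w := hx a hap haq hav
            subst haw
            have hnd := hq.reverse.support_nodup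
            rw [SimpleGraph.Walk.support_eq_cons q.reverse, List.nodup_cons] at hnd
            exact hnd.1 ha2

/-- In a graph of girth `> 2k`, a vertex `u` at distance `≥ j` from `v` (with `j + 1 ≤ k`)
cannot have two distinct neighbors both at distance `≤ j` from `v`. -/
lemma no_two_short_neighbors {k : ℕ}
    (hgirth : ∀ (a : V) (c : G.Walk a a), c.IsCycle → 2 * k + 1 ≤ c.length)
    {v u x y : V} {j : ℕ} (hj : j + 1 ≤ k) (hxy : x ≠ y)
    (hux : G.Adj u x) (huy : G.Adj u y) (hrx : G.Reachable v x) (hry : G.Reachable v y)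
    (hdx : G.dist v x ≤ j) (hdy : G.dist v y ≤ j) (hu : j ≤ G.dist v u) : False := by
  obtain ⟨px, hpx, hlx⟩ := hrx.exists_path_of_dist
  obtain ⟨py, hpy, hly⟩ := hry.exists_path_of_dist
  have key : ∀ (z : V) (pz : G.Walk v z), pz.length ≤ j → G.Adj u z → u ∉ pz.support := by
    intro z pz hlen hadj hmem
    have h1 : G.dist v u ≤ (pz.takeUntil u hmem).length := SimpleGraph.dist_le _
    have h2 : (pz.takeUntil u hmem).length ≤ pz.length :=
      SimpleGraph.Walk.length_takeUntil_le pz hmem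
    have h3 := congrArg SimpleGraph.Walk.length (pz.take_spec hmem)
    rw [SimpleGraph.Walk.length_append] at h3
    have h4 : (pz.dropUntil u hmem).length = 0 := by omega
    exact hadj.ne (SimpleGraph.Walk.eq_of_length_eq_zero h4)
  have hP : (px.concat hux.symm).IsPath :=
    concat_isPath hpx hux.symm (key x px (by omega) hux)
  have hQ : (py.concat huy.symm).IsPath :=
    concat_isPath hpy huy.symm (key y py (by omega) huy)
  have hPQ : px.concat hux.symm ≠ py.concat huy.symm := by
    intro h
    have h' := congrArg (fun r => (SimpleGraph.Walk.reverse r).support) h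
    simp only [SimpleGraph.Walk.reverse_concat, SimpleGraph.Walk.support_cons] at h'
    rw [SimpleGraph.Walk.support_eq_cons px.reverse,
      SimpleGraph.Walk.support_eq_cons py.reverse] at h'
    simp only [List.cons.injEq] at h'
    exact hxy h'.2.1
  obtain ⟨u', c, hc, hlc⟩ := two_paths_cycle ((px.concat hux.symm).length +
      (py.concat huy.symm).length) (px.concat hux.symm) (py.concat huy.symm) hP hQ hPQ le_rfl
  have hg := hgirth u' c hc
  have e1 : (px.concat hux.symm).length = px.length + 1 := SimpleGraph.Walk.length_concat _ _
  have e2 : (py.concat huy.symm).length = py.length + 1 := SimpleGraph.Walk.length_concat _ _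
  omega

end MooreAux

/-- Moore bound: a nonempty graph with minimum degree `d ≥ 2` and
girth at least `2k+1` (no cycle of length `≤ 2k`) has at least
`1 + d·((d−1)^k − 1)/(d−2)` vertices when `d ≥ 3`, and at least `2k+1`
vertices when `d = 2`. -/
theorem moore_bound {V : Type*} [Fintype V] [Nonempty V] [DecidableEq V]
    (G : SimpleGraph V) [DecidableRel G.Adj] (d k : ℕ) (hd : 2 ≤ d)
    (hdeg : ∀ v, d ≤ G.degree v)
    (hgirth : ∀ (v : V) (c : G.Walk v v), c.IsCycle → 2 * k + 1 ≤ c.length) :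
    (3 ≤ d →
      (1 : ℝ) + (d : ℝ) * (((d : ℝ) - 1) ^ k - 1) / ((d : ℝ) - 2) ≤
        (Fintype.card V : ℝ)) ∧
    (d = 2 → 2 * k + 1 ≤ Fintype.card V) := by
  classical
  obtain ⟨v⟩ := ‹Nonempty V›
  set S : ℕ → Finset V :=
    fun i => Finset.univ.filter (fun u => G.Reachable v u ∧ G.dist v u = i) with hS
  have hmemS : ∀ i u, u ∈ S i ↔ G.Reachable v u ∧ G.dist v u = i := by
    intro i u; simp [hS]
  have hC : ∀ (j : ℕ), j + 1 ≤ k → ∀ u x y : V, x ≠ y → G.Adj u x → G.Adj u y →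
      G.Reachable v x → G.Reachable v y → G.dist v x ≤ j → G.dist v y ≤ j →
      j ≤ G.dist v u → False := fun j hj u x y h1 h2 h3 h4 h5 h6 h7 h8 =>
    MooreAux.no_two_short_neighbors hgirth hj h1 h2 h3 h4 h5 h6 h7 h8
  have hnbr : ∀ u x : V, G.Reachable v u → G.Adj u x →
      G.Reachable v x ∧ G.dist v x ≤ G.dist v u + 1 := by
    intro u x hru hadj
    refine ⟨hru.trans hadj.reachable, ?_⟩
    obtain ⟨pu, hpu⟩ := hru.exists_walk_length_eq_dist
    have := SimpleGraph.dist_le (pu.concat hadj)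
    rwa [SimpleGraph.Walk.length_concat, hpu] at this
  have hS1 : d ≤ (S 1).card := by
    have hsub : G.neighborFinset v ⊆ S 1 := by
      intro x hx
      rw [SimpleGraph.mem_neighborFinset] at hx
      rw [hmemS]
      exact ⟨hx.reachable, (SimpleGraph.dist_eq_one_iff_adj).mpr hx⟩
    calc d ≤ G.degree v := hdeg v
      _ = (G.neighborFinset v).card := rfl
      _ ≤ (S 1).card := Finset.card_le_card hsub
  have hL3 : ∀ i, 1 ≤ i → i + 1 ≤ k → (d - 1) * (S i).card ≤ (S (i + 1)).card := by
    intro i hi1 hik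
    have ha : ∀ u ∈ S i, d - 1 ≤ ((S (i + 1)).filter (fun x => G.Adj u x)).card := by
      intro u hu
      rw [hmemS] at hu
      have hbad : ((G.neighborFinset u).filter (fun x => x ∉ S (i + 1))).card ≤ 1 := by
        rw [Finset.card_le_one]
        intro x hxm y hym
        by_contra hxy
        rw [Finset.mem_filter, SimpleGraph.mem_neighborFinset] at hxm hym
        have hx' := hnbr u x hu.1 hxm.1
        have hy' := hnbr u y hu.1 hym.1
        have hdx : G.dist v x ≤ i := by
          have hne : G.dist v x ≠ i + 1 := fun h => hxm.2 ((hmemS _ _).mpr ⟨hx'.1, h⟩)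
          omega
        have hdy : G.dist v y ≤ i := by
          have hne : G.dist v y ≠ i + 1 := fun h => hym.2 ((hmemS _ _).mpr ⟨hy'.1, h⟩)
          omega
        exact hC i hik u x y hxy hxm.1 hym.1 hx'.1 hy'.1 hdx hdy (by omega)
      have heq : (G.neighborFinset u).filter (fun x => x ∈ S (i + 1)) =
          (S (i + 1)).filter (fun x => G.Adj u x) := by
        ext x
        simp only [Finset.mem_filter, SimpleGraph.mem_neighborFinset]
        tauto
      have hsum := Finset.card_filter_add_card_filter_not
        (s := G.neighborFinset u) (p := fun x => x ∈ S (i + 1))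
      rw [heq] at hsum
      have hdeg' : d ≤ (G.neighborFinset u).card := hdeg u
      omega
    have hb : ∀ x ∈ S (i + 1), ((S i).filter (fun u => G.Adj u x)).card ≤ 1 := by
      intro x hx
      rw [hmemS] at hx
      rw [Finset.card_le_one]
      intro u1 h1 u2 h2
      by_contra hne
      rw [Finset.mem_filter, hmemS] at h1 h2
      exact hC i hik x u1 u2 hne h1.2.symm h2.2.symm h1.1.1 h2.1.1
        (le_of_eq h1.1.2) (le_of_eq h2.1.2) (by omega)
    calc (d - 1) * (S i).card = ∑ _u ∈ S i, (d - 1) := by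
          rw [Finset.sum_const, smul_eq_mul, mul_comm]
      _ ≤ ∑ u ∈ S i, ((S (i + 1)).filter (fun x => G.Adj u x)).card := Finset.sum_le_sum ha
      _ = ∑ x ∈ S (i + 1), ((S i).filter (fun u => G.Adj u x)).card := by
          simp only [Finset.card_filter]
          exact Finset.sum_comm
      _ ≤ ∑ _x ∈ S (i + 1), 1 := Finset.sum_le_sum hb
      _ = (S (i + 1)).card := by simp
  have hgrow : ∀ j, j < k → d * (d - 1) ^ j ≤ (S (j + 1)).card := by
    intro j
    induction j with
    | zero => intro _; simpa using hS1
    | succ j ihj =>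
      intro hjk
      have h1 := ihj (by omega)
      have h2 := hL3 (j + 1) (by omega) (by omega)
      calc d * (d - 1) ^ (j + 1) = (d - 1) * (d * (d - 1) ^ j) := by ring
        _ ≤ (d - 1) * (S (j + 1)).card := Nat.mul_le_mul_left _ h1
        _ ≤ (S (j + 1 + 1)).card := h2
  have hsum : ∑ i ∈ Finset.range (k + 1), (S i).card ≤ Fintype.card V := by
    rw [← Finset.card_biUnion]
    · exact Finset.card_le_univ _
    · intro i _ j _ hij
      rw [Function.onFun, Finset.disjoint_left]
      intro a hai haj
      rw [hmemS] at hai haj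
      have : i = j := by omega
      exact hij this
  have hS0 : 1 ≤ (S 0).card := by
    rw [Nat.one_le_iff_ne_zero, ← Nat.pos_iff_ne_zero, Finset.card_pos]
    exact ⟨v, (hmemS 0 v).mpr ⟨SimpleGraph.Reachable.refl v, SimpleGraph.dist_self⟩⟩
  have hmain : 1 + d * ∑ j ∈ Finset.range k, (d - 1) ^ j ≤ Fintype.card V := by
    have h1 : ∑ j ∈ Finset.range k, d * (d - 1) ^ j ≤
        ∑ j ∈ Finset.range k, (S (j + 1)).card :=
      Finset.sum_le_sum fun j hj => hgrow j (Finset.mem_range.mp hj)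
    have h2 : ∑ i ∈ Finset.range (k + 1), (S i).card =
        (∑ j ∈ Finset.range k, (S (j + 1)).card) + (S 0).card := Finset.sum_range_succ' _ k
    rw [Finset.mul_sum]
    omega
  constructor
  · intro h3
    have hd1 : ((d : ℝ) - 1) ≠ 1 := by
      have h3R : (3 : ℝ) ≤ (d : ℝ) := by exact_mod_cast h3
      intro h
      linarith
    have hcast : ((d - 1 : ℕ) : ℝ) = (d : ℝ) - 1 := by
      have h1 : 1 ≤ d := by omega
      rw [Nat.cast_sub h1, Nat.cast_one]
    have key : ((1 + d * ∑ j ∈ Finset.range k, (d - 1) ^ j : ℕ) : ℝ) =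
        1 + (d : ℝ) * ∑ j ∈ Finset.range k, ((d : ℝ) - 1) ^ j := by
      push_cast [hcast]
      ring
    have hmainR : (1 : ℝ) + (d : ℝ) * ∑ j ∈ Finset.range k, ((d : ℝ) - 1) ^ j ≤
        (Fintype.card V : ℝ) := by
      rw [← key]
      exact_mod_cast hmain
    rw [geom_sum_eq hd1 k] at hmainR
    have hd2 : (d : ℝ) - 1 - 1 = (d : ℝ) - 2 := by ring
    rw [hd2] at hmainR
    rw [mul_div_assoc]
    exact hmainR
  · intro h2
    subst h2
    have : (2 - 1 : ℕ) = 1 := rfl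
    rw [this] at hmain
    simp only [one_pow, Finset.sum_const, Finset.card_range, smul_eq_mul, mul_one] at hmain
    omega
end

section
/- 3-approximation via nearest landmark: let G be a weighted graph, S ⊆ V, and for each u let s_u ∈ S minimize d(s,u) over s ∈ S. If for vertices v,u there exists ŝ ∈ S lying on a shortest v–u path (i.e., d(v,u) = d(v,ŝ) + d(ŝ,u)), then d(v,s_u) + d(s_u,u) ≤ 3·d(v,u). -/
/-- Weight (length) of a walk with respect to an edge-weight function. -/
noncomputable def wlen {V : Type*} {G : SimpleGraph V} (w : V → V → ℝ) {a b : V}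
    (p : G.Walk a b) : ℝ :=
  (p.darts.map fun d => w d.toProd.1 d.toProd.2).sum

/-- Weighted shortest-path distance: infimum of weights of walks. -/
noncomputable def wdist {V : Type*} (G : SimpleGraph V) (w : V → V → ℝ) (a b : V) : ℝ :=
  sInf {r | ∃ p : G.Walk a b, wlen w p = r}

/-!
The nearest landmark `s_u` is no farther from `u` than `ŝ`, and since `ŝ` lies on a shortest
`v`–`u` path, `d(ŝ,u) ≤ d(v,u)`. Going from `v` to `s_u` through `u` then gives
`d(v,s_u) + d(s_u,u) ≤ d(v,u) + 2 d(s_u,u) ≤ 3 d(v,u)`.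
-/

section WeightedDistance

variable {V : Type*} {G : SimpleGraph V} {w : V → V → ℝ} {a b c : V}

lemma wlen_nonneg (hw : ∀ a b, G.Adj a b → 0 ≤ w a b) (p : G.Walk a b) : 0 ≤ wlen w p :=
  List.sum_nonneg <| by simpa using fun d _ => hw _ _ d.adj

lemma wlen_append (p : G.Walk a b) (q : G.Walk b c) :
    wlen w (p.append q) = wlen w p + wlen w q := by
  simp [wlen, SimpleGraph.Walk.darts_append]

lemma wlen_reverse (hsymm : ∀ a b, w a b = w b a) (p : G.Walk a b) :
    wlen w p.reverse = wlen w p := by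
  simp [wlen, SimpleGraph.Walk.darts_reverse, List.map_reverse, Function.comp_def, hsymm]

lemma wdist_eq_iInf : wdist G w a b = ⨅ p : G.Walk a b, wlen w p := rfl

lemma wdist_le_wlen (hw : ∀ a b, G.Adj a b → 0 ≤ w a b) (p : G.Walk a b) :
    wdist G w a b ≤ wlen w p :=
  ciInf_le ⟨0, Set.forall_mem_range.2 (wlen_nonneg hw)⟩ p

lemma wdist_nonneg (hw : ∀ a b, G.Adj a b → 0 ≤ w a b) : 0 ≤ wdist G w a b :=
  Real.iInf_nonneg (wlen_nonneg hw)

lemma wdist_comm (hsymm : ∀ a b, w a b = w b a) (a b : V) : wdist G w a b = wdist G w b a := by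
  simp only [wdist_eq_iInf, ← wlen_reverse hsymm (G := G) (a := b)]
  exact (SimpleGraph.Walk.reverse_surjective.iInf_comp (wlen w)).symm

lemma wdist_triangle (hw : ∀ a b, G.Adj a b → 0 ≤ w a b) (hab : G.Reachable a b)
    (hbc : G.Reachable b c) : wdist G w a c ≤ wdist G w a b + wdist G w b c := by
  have : Nonempty (G.Walk a b) := hab
  have : Nonempty (G.Walk b c) := hbc
  exact le_ciInf_add_ciInf fun p q => (wdist_le_wlen hw (p.append q)).trans_eq (wlen_append p q)

end WeightedDistance

theorem landmark_three_approx_general {V : Type*}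
    (G : SimpleGraph V) (hconn : G.Connected)
    (w : V → V → ℝ) (hpos : ∀ a b, G.Adj a b → 0 < w a b)
    (hsymm : ∀ a b, w a b = w b a)
    (S : Finset V) (v u : V)
    (su : V) (hmin : ∀ s ∈ S, wdist G w su u ≤ wdist G w s u)
    (sHat : V) (hsHat : sHat ∈ S)
    (hon : wdist G w v u = wdist G w v sHat + wdist G w sHat u) :
    wdist G w v su + wdist G w su u ≤ 3 * wdist G w v u := by
  have hw : ∀ a b, G.Adj a b → 0 ≤ w a b := fun a b h => (hpos a b h).le
  have hsHat_le : wdist G w sHat u ≤ wdist G w v u :=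
    hon ▸ le_add_of_nonneg_left (wdist_nonneg hw)
  calc wdist G w v su + wdist G w su u
      ≤ wdist G w v u + wdist G w u su + wdist G w su u := by
        gcongr; exact wdist_triangle hw (hconn v u) (hconn u su)
    _ = wdist G w v u + 2 * wdist G w su u := by rw [wdist_comm hsymm u su]; ring
    _ ≤ wdist G w v u + 2 * wdist G w sHat u := by gcongr; exact hmin sHat hsHat
    _ ≤ 3 * wdist G w v u := by linarith

/-- 3-approximation via nearest landmark: in a connected finite
weighted graph `G`, let `S` be a nonempty set of landmarks and let `s_u ∈ S`
minimize `d(s,u)` over `s ∈ S`. If some `sHat ∈ S` lies on a shortest `v`–`u`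
path, i.e. `d(v,u) = d(v,sHat) + d(sHat,u)`, then
`d(v,s_u) + d(s_u,u) ≤ 3·d(v,u)`. -/
theorem landmark_three_approx {V : Type*} [Fintype V] [DecidableEq V]
    (G : SimpleGraph V) (hconn : G.Connected)
    (w : V → V → ℝ) (hpos : ∀ a b, G.Adj a b → 0 < w a b)
    (hsymm : ∀ a b, w a b = w b a)
    (S : Finset V) (hS : S.Nonempty) (v u : V)
    (su : V) (hsu : su ∈ S) (hmin : ∀ s ∈ S, wdist G w su u ≤ wdist G w s u)
    (sHat : V) (hsHat : sHat ∈ S)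
    (hon : wdist G w v u = wdist G w v sHat + wdist G w sHat u) :
    wdist G w v su + wdist G w su u ≤ 3 * wdist G w v u :=
  landmark_three_approx_general G hconn w hpos hsymm S v u su hmin sHat hsHat hon
end

section
/- On unweighted graphs, the nearest-landmark oracle gives stretch 1+2ε beyond hop radius: let G be unweighted, and suppose every vertex knows exact distances within h = h'/ε hops. If every shortest v–u path has more than h edges and some shortest v–u path contains a landmark within h' hops of u, then min(d_h(v,u), d(v,s_u)+d(s_u,u)) ≤ (1+2ε)·d(v,u). -/
/-- on an unweighted (connected) graph `G`, with `h = h'/ε`,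
suppose every shortest `v`–`u` path has more than `h` edges (i.e. `h < d(v,u)`,
unit weights), and some shortest `v`–`u` path contains a landmark `sHat ∈ S`
within `h'` hops of `u`; let `s_u ∈ S` minimize `d(s,u)`. Then
`min(d_h(v,u), d(v,s_u) + d(s_u,u)) ≤ (1+2ε)·d(v,u)`, where `d_h` is the
`h`-hop-bounded distance (the min is expressed as a disjunction: either some
walk of at most `h` edges is short enough, or the landmark estimate is). -/
theorem unweighted_landmark_stretch {V : Type*} (G : SimpleGraph V)
    (hconn : G.Connected)
    (ε : ℝ) (hε0 : 0 < ε) (hε1 : ε ≤ 1)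
    (h h' : ℕ) (hh : (h : ℝ) = (h' : ℝ) / ε)
    (S : Set V) (v u : V)
    (su : V) (hsu : su ∈ S) (hmin : ∀ s ∈ S, G.dist su u ≤ G.dist s u)
    (hfar : h < G.dist v u)
    (sHat : V) (hsHat : sHat ∈ S)
    (hon : G.dist v u = G.dist v sHat + G.dist sHat u)
    (hclose : G.dist sHat u ≤ h') :
    (∃ p : G.Walk v u, p.length ≤ h ∧
        (p.length : ℝ) ≤ (1 + 2 * ε) * (G.dist v u : ℝ)) ∨
    ((G.dist v su : ℝ) + (G.dist su u : ℝ) ≤ (1 + 2 * ε) * (G.dist v u : ℝ)) := by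
  right
  have h1 : G.dist su u ≤ G.dist sHat u := hmin sHat hsHat
  have h2 : G.dist v su ≤ G.dist v u + G.dist u su := hconn.dist_triangle
  have h3 : G.dist u su = G.dist su u := G.dist_comm
  have hbound : (G.dist v su : ℝ) + G.dist su u ≤ (G.dist v u : ℝ) + 2 * h' := by
    have : G.dist v su + G.dist su u ≤ G.dist v u + 2 * h' := by omega
    exact_mod_cast this
  have hh' : (h' : ℝ) = ε * h := by field_simp at hh ⊢; linarith [hh]
  have hfar' : (h : ℝ) ≤ G.dist v u := by exact_mod_cast hfar.le
  have : (h' : ℝ) ≤ ε * G.dist v u := by rw [hh']; nlinarith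
  nlinarith
end
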